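/- arXiv:2602.17191 — 7 statements merged into one kernel-verified Lean document; each statement's English description precedes it below -/
import Mathlib

section
/- For every 2-dimensional real normed space X, the Banach-Mazur distance from X to the Euclidean plane is at most √2. -/
/-!
Take an ellipse `E = {s • u + t • v | s² + t² ≤ 1}` of maximal area `|wedge f g u v|` inside the
unit ball `B` (John's ellipse). If `B` contained a point outside `√2 • E`, then after a rotation of
the axes that point is `R • u` with `R > √2`, and the convex hull of `E` and `±R • u` contains the
ellipse with semi-axes `R / √2` and `R / √(2 (R² - 1))`, whose area is larger by the factor
`R² / (2 √(R² - 1)) > 1`. So `E ⊆ B ⊆ √2 • E`, and the coordinates with respect to `u, v` are an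
isomorphism `T` onto the Euclidean plane with `‖T‖ ≤ √2` and `‖T⁻¹‖ ≤ 1`.
-/

open Real

variable {X : Type*} [NormedAddCommGroup X] [NormedSpace ℝ X]

/-- The conclusion says `(x, y) = l • (R, 0) + (1 - l) • p` with `p` in the unit disc. -/
lemma exists_convexComb_disc_of_mem_ellipse {R x y : ℝ} (hR : 2 < R ^ 2) (hR0 : 0 < R)
    (hx : 0 ≤ x) (hxy : 2 * x ^ 2 + 2 * (R ^ 2 - 1) * y ^ 2 ≤ R ^ 2) :
    ∃ l : ℝ, 0 ≤ l ∧ l < 1 ∧ (x - l * R) ^ 2 + y ^ 2 ≤ (1 - l) ^ 2 := by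
  have hR1 : 0 < R ^ 2 - 1 := by linarith
  rcases le_or_gt (R * x) 1 with hRx | hRx
  · refine ⟨0, le_rfl, one_pos, ?_⟩
    have hx2 : 2 * x ^ 2 ≤ 1 := by nlinarith [mul_le_mul hRx hRx (by positivity) zero_le_one]
    nlinarith
  · have hxR : x < R := by nlinarith
    refine ⟨(R * x - 1) / (R ^ 2 - 1), by positivity, by rw [div_lt_one hR1]; nlinarith, ?_⟩
    have hy : (R ^ 2 - 1) * y ^ 2 ≤ (R - x) ^ 2 := by nlinarith [sq_nonneg (R - 2 * x)]
    rw [div_mul_eq_mul_div, sub_div' hR1.ne', one_sub_div hR1.ne', div_pow, div_pow,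
      div_add' _ _ _ (by positivity), div_le_div_iff_of_pos_right (by positivity)]
    nlinarith [mul_le_mul_of_nonneg_left hy hR1.le]

lemma exists_one_lt_mul_of_two_lt_sq {R : ℝ} (hR : 2 < R ^ 2) :
    ∃ a b : ℝ, 2 * a ^ 2 = R ^ 2 ∧ 2 * (R ^ 2 - 1) * b ^ 2 = R ^ 2 ∧ 1 < a * b := by
  have hR1 : 0 < R ^ 2 - 1 := by linarith
  refine ⟨√(R ^ 2 / 2), √(R ^ 2 / (2 * (R ^ 2 - 1))), ?_, ?_, ?_⟩
  · rw [sq_sqrt (by positivity)]; ring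
  · rw [sq_sqrt (by positivity)]; field_simp
  · rw [← sqrt_mul (by positivity), lt_sqrt zero_le_one, one_pow, div_mul_div_comm,
      one_lt_div (by positivity)]
    nlinarith [sq_pos_of_pos (sub_pos.2 hR)]

def InscribedEllipse (u v : X) : Prop :=
  ∀ s t : ℝ, s ^ 2 + t ^ 2 ≤ 1 → ‖s • u + t • v‖ ≤ 1

namespace InscribedEllipse

variable {u v : X}

lemma of_norm_add_norm_le_one (h : ‖u‖ + ‖v‖ ≤ 1) : InscribedEllipse u v := by
  intro s t hst
  have hs : |s| ≤ 1 := sq_le_one_iff_abs_le_one s |>.1 (by nlinarith)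
  have ht : |t| ≤ 1 := sq_le_one_iff_abs_le_one t |>.1 (by nlinarith)
  calc ‖s • u + t • v‖ ≤ |s| * ‖u‖ + |t| * ‖v‖ := by
        simpa only [norm_smul, Real.norm_eq_abs] using norm_add_le (s • u) (t • v)
    _ ≤ 1 * ‖u‖ + 1 * ‖v‖ := by gcongr
    _ ≤ 1 := by linarith

lemma rotate (h : InscribedEllipse u v) {c e : ℝ} (hce : c ^ 2 + e ^ 2 = 1) :
    InscribedEllipse (c • u + e • v) (-e • u + c • v) := by
  intro s t hst
  have hrot : (s * c - t * e) ^ 2 + (s * e + t * c) ^ 2 = s ^ 2 + t ^ 2 := by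
    linear_combination (s ^ 2 + t ^ 2) * hce
  rw [show s • (c • u + e • v) + t • (-e • u + c • v) = (s * c - t * e) • u + (s * e + t * c) • v
    by module]
  exact h _ _ (hrot ▸ hst)

lemma norm_smul_add_smul_le_one (h : InscribedEllipse u v) {R x y : ℝ} (hR : 2 < R ^ 2)
    (hR0 : 0 < R) (hRu : ‖R • u‖ ≤ 1) (hxy : 2 * x ^ 2 + 2 * (R ^ 2 - 1) * y ^ 2 ≤ R ^ 2) :
    ‖x • u + y • v‖ ≤ 1 := by
  wlog hx : 0 ≤ x generalizing x y
  · have := this (x := -x) (y := -y) (by rwa [neg_sq, neg_sq]) (by linarith)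
    rwa [neg_smul, neg_smul, ← neg_add, norm_neg] at this
  obtain ⟨l, hl0, hl1, hl⟩ := exists_convexComb_disc_of_mem_ellipse hR hR0 hx hxy
  have hl1' : 0 < 1 - l := by linarith
  have hp : ‖((x - l * R) / (1 - l)) • u + (y / (1 - l)) • v‖ ≤ 1 := by
    refine h _ _ ?_
    rwa [div_pow, div_pow, ← add_div, div_le_one (by positivity)]
  have hdecomp : x • u + y • v =
      l • (R • u) + (1 - l) • (((x - l * R) / (1 - l)) • u + (y / (1 - l)) • v) := by
    match_scalars <;> field_simp
    ring
  rw [hdecomp, ← mem_closedBall_zero_iff]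
  exact convex_closedBall (0 : X) 1 (mem_closedBall_zero_iff.2 hRu) (mem_closedBall_zero_iff.2 hp)
    hl0 hl1'.le (by ring)

lemma stretch (h : InscribedEllipse u v) {R a b : ℝ} (hR : 2 < R ^ 2) (hR0 : 0 < R)
    (hRu : ‖R • u‖ ≤ 1) (ha : 2 * a ^ 2 = R ^ 2) (hb : 2 * (R ^ 2 - 1) * b ^ 2 = R ^ 2) :
    InscribedEllipse (a • u) (b • v) := by
  intro s t hst
  rw [smul_smul, smul_smul]
  refine h.norm_smul_add_smul_le_one hR hR0 hRu ?_
  calc 2 * (s * a) ^ 2 + 2 * (R ^ 2 - 1) * (t * b) ^ 2 = R ^ 2 * (s ^ 2 + t ^ 2) := by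
        linear_combination s ^ 2 * ha + t ^ 2 * hb
    _ ≤ R ^ 2 := mul_le_of_le_one_right (by positivity) hst

end InscribedEllipse

def wedge (f g : X →L[ℝ] ℝ) (u v : X) : ℝ := f u * g v - g u * f v

section wedge

variable (f g : X →L[ℝ] ℝ)

lemma wedge_smul_add_smul (u v : X) (α β γ δ : ℝ) :
    wedge f g (α • u + β • v) (γ • u + δ • v) = (α * δ - β * γ) * wedge f g u v := by
  simp only [wedge, map_add, map_smul, smul_eq_mul]
  ring

lemma continuous_wedge : Continuous fun p : X × X => wedge f g p.1 p.2 := by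
  unfold wedge
  fun_prop

variable {f g}

lemma linearIndependent_of_wedge_ne_zero {u v : X} (h : wedge f g u v ≠ 0) :
    LinearIndependent ℝ ![u, v] := by
  refine LinearIndependent.pair_iff.2 fun s t hst => ?_
  have hs := wedge_smul_add_smul f g u v s t 0 1
  have ht := wedge_smul_add_smul f g u v s t 1 0
  have hzero : ∀ w, wedge f g 0 w = 0 := fun w => by simp [wedge]
  rw [hst, hzero, eq_comm, mul_eq_zero] at hs ht
  constructor
  · simpa [h] using hs
  · simpa [h] using ht

end wedge

lemma InscribedEllipse.sq_add_sq_le_two {f g : X →L[ℝ] ℝ} {u v : X} (h : InscribedEllipse u v)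
    (hmax : ∀ u' v', InscribedEllipse u' v' → |wedge f g u' v'| ≤ |wedge f g u v|)
    (h0 : wedge f g u v ≠ 0) {s t : ℝ} (hst : ‖s • u + t • v‖ ≤ 1) : s ^ 2 + t ^ 2 ≤ 2 := by
  by_contra! hlt
  set R := √(s ^ 2 + t ^ 2)
  have hR0 : 0 < R := sqrt_pos.2 (by linarith)
  have hR2 : R ^ 2 = s ^ 2 + t ^ 2 := sq_sqrt (by positivity)
  obtain ⟨a, b, ha, hb, hab⟩ := exists_one_lt_mul_of_two_lt_sq (hR2 ▸ hlt)
  have hcs : (s / R) ^ 2 + (t / R) ^ 2 = 1 := by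
    rw [div_pow, div_pow, ← add_div, ← hR2, div_self (by positivity)]
  have hRu : ‖R • ((s / R) • u + (t / R) • v)‖ ≤ 1 := by
    rwa [smul_add, smul_smul, smul_smul, mul_div_cancel₀ _ hR0.ne', mul_div_cancel₀ _ hR0.ne']
  have hbig := hmax _ _ ((h.rotate hcs).stretch (hR2 ▸ hlt) hR0 hRu ha hb)
  rw [smul_add, smul_add, smul_smul, smul_smul, smul_smul, smul_smul, wedge_smul_add_smul,
    show a * (s / R) * (b * (s / R)) - a * (t / R) * (b * -(t / R)) = a * b by
      linear_combination a * b * hcs,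
    abs_mul, abs_of_pos (by linarith : (0 : ℝ) < a * b)] at hbig
  nlinarith [abs_pos.2 h0]

lemma isCompact_setOf_inscribedEllipse [FiniteDimensional ℝ X] :
    IsCompact {p : X × X | InscribedEllipse p.1 p.2} := by
  refine (isCompact_closedBall (0 : X × X) 1).of_isClosed_subset ?_ fun p hp => ?_
  · simp only [InscribedEllipse, Set.ofPred_forall]
    exact isClosed_iInter fun s => isClosed_iInter fun t => isClosed_iInter fun _ =>
      isClosed_le (by fun_prop) continuous_const
  · rw [mem_closedBall_zero_iff, Prod.norm_def]
    exact max_le (by simpa using hp 1 0 (by norm_num)) (by simpa using hp 0 1 (by norm_num))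

lemma exists_inscribedEllipse_isMaxOn_abs_wedge [FiniteDimensional ℝ X] (f g : X →L[ℝ] ℝ)
    {u₀ v₀ : X} (h₀ : wedge f g u₀ v₀ ≠ 0) :
    ∃ u v, InscribedEllipse u v ∧ wedge f g u v ≠ 0 ∧
      ∀ u' v', InscribedEllipse u' v' → |wedge f g u' v'| ≤ |wedge f g u v| := by
  set ε := (‖u₀‖ + ‖v₀‖ + 1)⁻¹
  have hε : 0 < ε := by positivity
  have hsmall : InscribedEllipse (ε • u₀) (ε • v₀) := by
    refine .of_norm_add_norm_le_one ?_
    rw [norm_smul, norm_smul, norm_of_nonneg hε.le, ← mul_add, inv_mul_le_one₀ (by positivity)]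
    linarith
  have hw₀ : wedge f g (ε • u₀) (ε • v₀) ≠ 0 := by
    have := wedge_smul_add_smul f g u₀ v₀ ε 0 0 ε
    simp only [zero_smul, add_zero, zero_add, mul_zero, sub_zero] at this
    rw [this]
    exact mul_ne_zero (by positivity) h₀
  obtain ⟨⟨u, v⟩, huv, hmax⟩ := isCompact_setOf_inscribedEllipse.exists_isMaxOn
    ⟨(ε • u₀, ε • v₀), hsmall⟩ (continuous_wedge f g).abs.continuousOn
  refine ⟨u, v, huv, fun h0 => ?_, fun u' v' h' => hmax (a := (u', v')) h'⟩
  have := hmax (a := (ε • u₀, ε • v₀)) hsmall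
  simp only [h0, abs_zero] at this
  exact hw₀ (abs_nonpos_iff.1 this)

lemma exists_continuousLinearEquiv_symm_apply (hdim : Module.finrank ℝ X = 2) {u v : X}
    (huv : LinearIndependent ℝ ![u, v]) :
    ∃ T : X ≃L[ℝ] EuclideanSpace ℝ (Fin 2), ∀ ξ, T.symm ξ = ξ 0 • u + ξ 1 • v := by
  have : FiniteDimensional ℝ X := Module.finite_of_finrank_eq_succ hdim
  let L : EuclideanSpace ℝ (Fin 2) →L[ℝ] X :=
    (EuclideanSpace.proj 0).smulRight u + (EuclideanSpace.proj 1).smulRight v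
  have hL : Function.Injective L := by
    refine (injective_iff_map_eq_zero L).2 fun ξ hξ => ?_
    obtain ⟨h0, h1⟩ := LinearIndependent.pair_iff.1 huv _ _ hξ
    ext i
    fin_cases i <;> assumption
  exact ⟨(L.toLinearMap.linearEquivOfInjective hL (by simp [hdim])).toContinuousLinearEquiv.symm,
    fun ξ => rfl⟩

lemma exists_continuousLinearEquiv_norm_le (hdim : Module.finrank ℝ X = 2) :
    ∃ T : X ≃L[ℝ] EuclideanSpace ℝ (Fin 2), ‖(T : X →L[ℝ] EuclideanSpace ℝ (Fin 2))‖ ≤ √2 ∧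
      ‖(T.symm : EuclideanSpace ℝ (Fin 2) →L[ℝ] X)‖ ≤ 1 := by
  have : FiniteDimensional ℝ X := Module.finite_of_finrank_eq_succ hdim
  let b := Module.finBasisOfFinrankEq ℝ X hdim
  have hb : wedge (b.coord 0).toContinuousLinearMap (b.coord 1).toContinuousLinearMap
      (b 0) (b 1) ≠ 0 := by
    simp [wedge]
  obtain ⟨u, v, huv, h0, hmax⟩ := exists_inscribedEllipse_isMaxOn_abs_wedge _ _ hb
  obtain ⟨T, hT⟩ :=
    exists_continuousLinearEquiv_symm_apply hdim (linearIndependent_of_wedge_ne_zero h0)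
  have hnorm (ξ : EuclideanSpace ℝ (Fin 2)) : ‖ξ‖ ^ 2 = ξ 0 ^ 2 + ξ 1 ^ 2 := by
    rw [EuclideanSpace.real_norm_sq_eq, Fin.sum_univ_two]
  refine ⟨T, ContinuousLinearMap.opNorm_le_of_unit_norm (sqrt_nonneg 2) fun z hz => ?_,
    ContinuousLinearMap.opNorm_le_of_unit_norm zero_le_one fun ξ hξ => ?_⟩
  · refine le_sqrt_of_sq_le ((hnorm _).trans_le (huv.sq_add_sq_le_two hmax h0 ?_))
    rw [← hT, ContinuousLinearEquiv.coe_coe, T.symm_apply_apply, hz]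
  · rw [ContinuousLinearEquiv.coe_coe, hT]
    exact huv _ _ (by rw [← hnorm, hξ, one_pow])

/-- Every 2-dimensional real normed space is at Banach-Mazur distance at most `√2`
from the Euclidean plane. -/
theorem bm_dist_le_sqrt_two (X : Type) [NormedAddCommGroup X] [NormedSpace ℝ X]
    (hdim : Module.finrank ℝ X = 2) :
    sInf {d : ℝ | ∃ T : X ≃L[ℝ] EuclideanSpace ℝ (Fin 2),
        d = ‖(T : X →L[ℝ] EuclideanSpace ℝ (Fin 2))‖ *
            ‖(T.symm : EuclideanSpace ℝ (Fin 2) →L[ℝ] X)‖} ≤ Real.sqrt 2 := by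
  obtain ⟨T, hT, hTsymm⟩ := exists_continuousLinearEquiv_norm_le hdim
  refine le_trans (csInf_le ⟨0, ?_⟩ ⟨T, rfl⟩) ?_
  · rintro _ ⟨T', rfl⟩
    positivity
  · simpa using mul_le_mul hT hTsymm (norm_nonneg _) (sqrt_nonneg 2)
end

section
/- Let φ₁ < φ₂ < φ₃ < φ₁ + π. Then the linear map A : ℝ³ → ℝ³ sending (a,b,c) to the values of φ ↦ a + b cos 2φ + c sin 2φ at φ₁, φ₂, φ₃ is a linear isomorphism, and its determinant equals 4 sin(φ₂−φ₁) sin(φ₃−φ₁) sin(φ₃−φ₂) > 0. -/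
open Real Matrix

private lemma tri_identity (a c : ℝ) :
    sin (2 * c) - sin (2 * (a + c)) + sin (2 * a) = 4 * sin a * sin (a + c) * sin c := by
  rw [show 2 * (a + c) = 2 * a + 2 * c by ring, sin_add, sin_add, sin_two_mul, sin_two_mul,
    cos_two_mul, cos_two_mul]
  linear_combination (-4 * sin c * cos c) * sin_sq_add_cos_sq a +
    (-4 * sin a * cos a) * sin_sq_add_cos_sq c

/-- For `φ₁ < φ₂ < φ₃ < φ₁ + π`, the evaluation map `(a,b,c) ↦ (𝔑(a,b,c)(φᵢ))ᵢ` for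
`𝔑(a,b,c)(φ) = a + b cos 2φ + c sin 2φ` is a linear isomorphism of `ℝ³`, with determinant
`4 sin(φ₂−φ₁) sin(φ₃−φ₁) sin(φ₃−φ₂) > 0`. -/
theorem interpolation_iso (φ₁ φ₂ φ₃ : ℝ) (h12 : φ₁ < φ₂) (h23 : φ₂ < φ₃)
    (h31 : φ₃ < φ₁ + π) :
    Function.Bijective (Matrix.toLin'
      !![1, cos (2 * φ₁), sin (2 * φ₁);
         1, cos (2 * φ₂), sin (2 * φ₂);
         1, cos (2 * φ₃), sin (2 * φ₃)]) ∧
    (!![1, cos (2 * φ₁), sin (2 * φ₁);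
        1, cos (2 * φ₂), sin (2 * φ₂);
        1, cos (2 * φ₃), sin (2 * φ₃)] : Matrix (Fin 3) (Fin 3) ℝ).det =
      4 * sin (φ₂ - φ₁) * sin (φ₃ - φ₁) * sin (φ₃ - φ₂) ∧
    0 < 4 * sin (φ₂ - φ₁) * sin (φ₃ - φ₁) * sin (φ₃ - φ₂) := by
  set M : Matrix (Fin 3) (Fin 3) ℝ :=
    !![1, cos (2 * φ₁), sin (2 * φ₁);
       1, cos (2 * φ₂), sin (2 * φ₂);
       1, cos (2 * φ₃), sin (2 * φ₃)] with hM
  have hdet : M.det = 4 * sin (φ₂ - φ₁) * sin (φ₃ - φ₁) * sin (φ₃ - φ₂) := by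
    have step : M.det = (cos (2*φ₂) * sin (2*φ₃) - cos (2*φ₃) * sin (2*φ₂))
        - (cos (2*φ₁) * sin (2*φ₃) - cos (2*φ₃) * sin (2*φ₁))
        + (cos (2*φ₁) * sin (2*φ₂) - cos (2*φ₂) * sin (2*φ₁)) := by
      rw [hM]
      simp [Matrix.det_fin_three, Matrix.vecHead, Matrix.vecTail]
      ring
    have s1 : cos (2*φ₂) * sin (2*φ₃) - cos (2*φ₃) * sin (2*φ₂) = sin (2*φ₃ - 2*φ₂) := by
      rw [sin_sub]; ring
    have s2 : cos (2*φ₁) * sin (2*φ₃) - cos (2*φ₃) * sin (2*φ₁) = sin (2*φ₃ - 2*φ₁) := by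
      rw [sin_sub]; ring
    have s3 : cos (2*φ₁) * sin (2*φ₂) - cos (2*φ₂) * sin (2*φ₁) = sin (2*φ₂ - 2*φ₁) := by
      rw [sin_sub]; ring
    rw [step, s1, s2, s3]
    have key := tri_identity (φ₂ - φ₁) (φ₃ - φ₂)
    have e1 : 2*φ₃ - 2*φ₂ = 2 * (φ₃ - φ₂) := by ring
    have e2 : 2*φ₃ - 2*φ₁ = 2 * ((φ₂ - φ₁) + (φ₃ - φ₂)) := by ring
    have e3 : 2*φ₂ - 2*φ₁ = 2 * (φ₂ - φ₁) := by ring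
    have e4 : (φ₂ - φ₁) + (φ₃ - φ₂) = φ₃ - φ₁ := by ring
    rw [e1, e2, e3, key, e4]
  have hpos : 0 < 4 * sin (φ₂ - φ₁) * sin (φ₃ - φ₁) * sin (φ₃ - φ₂) := by
    have s1 : 0 < sin (φ₂ - φ₁) := sin_pos_of_pos_of_lt_pi (by linarith) (by linarith)
    have s2 : 0 < sin (φ₃ - φ₁) := sin_pos_of_pos_of_lt_pi (by linarith) (by linarith)
    have s3 : 0 < sin (φ₃ - φ₂) := sin_pos_of_pos_of_lt_pi (by linarith) (by linarith)
    positivity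
  have hdet' : IsUnit M.det := by
    rw [hdet]; exact isUnit_iff_ne_zero.mpr hpos.ne'
  refine ⟨?_, hdet, hpos⟩
  rw [show Matrix.toLin' M = Matrix.toLin (Pi.basisFun ℝ (Fin 3)) (Pi.basisFun ℝ (Fin 3)) M by
    rw [Matrix.toLin_eq_toLin']]
  exact ⟨LinearMap.ker_eq_bot.mp (Matrix.ker_toLin_eq_bot _ M hdet'),
    LinearMap.range_eq_top.mp (Matrix.range_toLin_eq_top _ M hdet')⟩
end

section
/- If two trigonometric functions of the form φ ↦ a + b cos 2φ + c sin 2φ coincide at three points φ₁ < φ₂ < φ₃ < φ₁ + π, then they are identically equal (i.e., their coefficient triples are equal). -/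
open Real

/-- If two functions of the form `φ ↦ a + b cos 2φ + c sin 2φ` coincide at three points
`φ₁ < φ₂ < φ₃ < φ₁ + π`, then their coefficient triples are equal (so they are
identically equal). -/
theorem trig_three_points (a b c a' b' c' φ₁ φ₂ φ₃ : ℝ)
    (h12 : φ₁ < φ₂) (h23 : φ₂ < φ₃) (h31 : φ₃ < φ₁ + π)
    (h1 : a + b * cos (2 * φ₁) + c * sin (2 * φ₁) = a' + b' * cos (2 * φ₁) + c' * sin (2 * φ₁))
    (h2 : a + b * cos (2 * φ₂) + c * sin (2 * φ₂) = a' + b' * cos (2 * φ₂) + c' * sin (2 * φ₂))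
    (h3 : a + b * cos (2 * φ₃) + c * sin (2 * φ₃) = a' + b' * cos (2 * φ₃) + c' * sin (2 * φ₃)) :
    a = a' ∧ b = b' ∧ c = c' := by
  have s12 : 0 < sin (φ₂ - φ₁) := sin_pos_of_pos_of_lt_pi (by linarith) (by linarith)
  have s13 : 0 < sin (φ₃ - φ₁) := sin_pos_of_pos_of_lt_pi (by linarith) (by linarith)
  have s23 : 0 < sin (φ₃ - φ₂) := sin_pos_of_pos_of_lt_pi (by linarith) (by linarith)
  -- sum-to-product identities
  have hc12 : cos (2 * φ₁) - cos (2 * φ₂) = 2 * sin (φ₁ + φ₂) * sin (φ₂ - φ₁) := by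
    rw [Real.cos_sub_cos, show (2*φ₁+2*φ₂)/2 = φ₁+φ₂ by ring,
      show (2*φ₁-2*φ₂)/2 = -(φ₂-φ₁) by ring, Real.sin_neg]; ring
  have hs12 : sin (2 * φ₁) - sin (2 * φ₂) = -2 * cos (φ₁ + φ₂) * sin (φ₂ - φ₁) := by
    rw [Real.sin_sub_sin, show (2*φ₁+2*φ₂)/2 = φ₁+φ₂ by ring,
      show (2*φ₁-2*φ₂)/2 = -(φ₂-φ₁) by ring, Real.sin_neg]; ring
  have hc13 : cos (2 * φ₁) - cos (2 * φ₃) = 2 * sin (φ₁ + φ₃) * sin (φ₃ - φ₁) := by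
    rw [Real.cos_sub_cos, show (2*φ₁+2*φ₃)/2 = φ₁+φ₃ by ring,
      show (2*φ₁-2*φ₃)/2 = -(φ₃-φ₁) by ring, Real.sin_neg]; ring
  have hs13 : sin (2 * φ₁) - sin (2 * φ₃) = -2 * cos (φ₁ + φ₃) * sin (φ₃ - φ₁) := by
    rw [Real.sin_sub_sin, show (2*φ₁+2*φ₃)/2 = φ₁+φ₃ by ring,
      show (2*φ₁-2*φ₃)/2 = -(φ₃-φ₁) by ring, Real.sin_neg]; ring
  have e12 : (b - b') * sin (φ₁ + φ₂) - (c - c') * cos (φ₁ + φ₂) = 0 := by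
    have key : sin (φ₂ - φ₁) *
        ((b - b') * sin (φ₁ + φ₂) - (c - c') * cos (φ₁ + φ₂)) = 0 := by
      linear_combination (h1 - h2) / 2 - (b - b') / 2 * hc12 - (c - c') / 2 * hs12
    rcases mul_eq_zero.mp key with h | h
    · exact absurd h (ne_of_gt s12)
    · exact h
  have e13 : (b - b') * sin (φ₁ + φ₃) - (c - c') * cos (φ₁ + φ₃) = 0 := by
    have key : sin (φ₃ - φ₁) *
        ((b - b') * sin (φ₁ + φ₃) - (c - c') * cos (φ₁ + φ₃)) = 0 := by
      linear_combination (h1 - h3) / 2 - (b - b') / 2 * hc13 - (c - c') / 2 * hs13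
    rcases mul_eq_zero.mp key with h | h
    · exact absurd h (ne_of_gt s13)
    · exact h
  have hsub : sin (φ₃ - φ₂) = sin (φ₁ + φ₃) * cos (φ₁ + φ₂) - cos (φ₁ + φ₃) * sin (φ₁ + φ₂) := by
    rw [show φ₃ - φ₂ = (φ₁ + φ₃) - (φ₁ + φ₂) by ring, Real.sin_sub]
  have hb : b = b' := by
    have key : (b - b') * sin (φ₃ - φ₂) = 0 := by
      linear_combination cos (φ₁ + φ₂) * e13 - cos (φ₁ + φ₃) * e12 + (b - b') * hsub
    rcases mul_eq_zero.mp key with h | h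
    · linarith
    · exact absurd h (ne_of_gt s23)
  have hcc : c = c' := by
    have key : (c - c') * sin (φ₃ - φ₂) = 0 := by
      linear_combination sin (φ₁ + φ₂) * e13 - sin (φ₁ + φ₃) * e12 + (c - c') * hsub
    rcases mul_eq_zero.mp key with h | h
    · linarith
    · exact absurd h (ne_of_gt s23)
  refine ⟨?_, hb, hcc⟩
  have := h1
  rw [hb, hcc] at this
  linarith
end

section
/- Let g₁, g₂ ∈ 𝒞 (logarithms of polar radii of origin-centered ellipses). If there are φ₁, φ₂ with 0 < |φ₁ − φ₂| < π such that g₁(φ₁) = g₂(φ₁), g₁'(φ₁) = g₂'(φ₁), and g₁(φ₂) = g₂(φ₂), then g₁ = g₂. -/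
/-!
Put `θ = 2φ`. The difference `a + b cos θ + c sin θ` of the two trigonometric polynomials
`a₁ + b₁ cos θ + c₁ sin θ` and `a₂ + b₂ cos θ + c₂ sin θ` vanishes to second order at `θ₁ = 2φ₁`,
which forces it to be `a (1 - cos (θ - θ₁))`. This has no zero in `(θ₁ - 2π, θ₁ + 2π)` other
than `θ₁` unless `a = 0`, so the zero at `θ₂ = 2φ₂` makes the difference vanish identically.
-/

open Real

lemma add_mul_cos_add_mul_sin_pos {a b c : ℝ} (ha : 0 < a) (h : b ^ 2 + c ^ 2 < a ^ 2) (θ : ℝ) :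
    0 < a + b * cos θ + c * sin θ := by
  nlinarith [sin_sq_add_cos_sq θ, sq_nonneg (b * sin θ - c * cos θ),
    sq_nonneg (a + b * cos θ + c * sin θ), sq_nonneg (b * cos θ + c * sin θ - a)]

lemma hasDerivAt_add_mul_cos_add_mul_sin (a b c θ : ℝ) :
    HasDerivAt (fun θ => a + b * cos θ + c * sin θ) (c * cos θ - b * sin θ) θ := by
  refine ((((hasDerivAt_cos θ).const_mul b).const_add a).add
    ((hasDerivAt_sin θ).const_mul c)).congr_deriv ?_
  ring

lemma hasDerivAt_neg_half_log_add_mul_cos_two_mul {a b c : ℝ} (φ : ℝ)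
    (hpos : 0 < a + b * cos (2 * φ) + c * sin (2 * φ)) :
    HasDerivAt (fun φ => -(1 / 2) * log (a + b * cos (2 * φ) + c * sin (2 * φ)))
      (-(c * cos (2 * φ) - b * sin (2 * φ)) / (a + b * cos (2 * φ) + c * sin (2 * φ))) φ := by
  have hp := (hasDerivAt_add_mul_cos_add_mul_sin a b c (2 * φ)).comp φ
    ((hasDerivAt_id φ).const_mul 2)
  refine ((hp.log hpos.ne').const_mul (-(1 / 2) : ℝ)).congr_deriv ?_
  simp only [Function.comp_apply]
  ring

lemma eq_of_neg_half_mul_log_eq {x y : ℝ} (hx : 0 < x) (hy : 0 < y)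
    (h : -(1 / 2) * log x = -(1 / 2) * log y) : x = y :=
  log_injOn_pos hx hy (by simpa using h)

lemma eq_zero_of_double_zero_of_zero {a b c θ₁ θ₂ : ℝ}
    (h₁ : a + b * cos θ₁ + c * sin θ₁ = 0) (h₁' : c * cos θ₁ - b * sin θ₁ = 0)
    (h₂ : a + b * cos θ₂ + c * sin θ₂ = 0) (hθ : cos (θ₁ - θ₂) ≠ 1) :
    a = 0 ∧ b = 0 ∧ c = 0 := by
  have hpy := sin_sq_add_cos_sq θ₁
  have hb : b = -a * cos θ₁ := by
    linear_combination cos θ₁ * h₁ - sin θ₁ * h₁' - b * hpy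
  have hc : c = -a * sin θ₁ := by
    linear_combination sin θ₁ * h₁ + cos θ₁ * h₁' - c * hpy
  have ha : a * (1 - cos (θ₁ - θ₂)) = 0 := by
    rw [cos_sub]
    linear_combination h₂ - cos θ₂ * hb - sin θ₂ * hc
  have ha : a = 0 := (mul_eq_zero.mp ha).resolve_right (sub_ne_zero.mpr (Ne.symm hθ))
  exact ⟨ha, by simp [hb, ha], by simp [hc, ha]⟩

lemma cos_two_mul_ne_one {x : ℝ} (hx₀ : 0 < |x|) (hxπ : |x| < π) : cos (2 * x) ≠ 1 := by
  have hx := abs_lt.mp hxπ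
  rw [Ne, cos_eq_one_iff_of_lt_of_lt (by linarith) (by linarith)]
  intro hx₂
  rw [show x = 0 by linarith, abs_zero] at hx₀
  exact lt_irrefl 0 hx₀

/-- If `g₁, g₂ ∈ 𝒞` agree in value and derivative at `φ₁` and in value at `φ₂`, where
`0 < |φ₁ − φ₂| < π`, then `g₁ = g₂`. -/
theorem log_ellipse_hermite (a₁ b₁ c₁ a₂ b₂ c₂ φ₁ φ₂ : ℝ)
    (hK₁ : 0 < a₁ ∧ b₁ ^ 2 + c₁ ^ 2 < a₁ ^ 2) (hK₂ : 0 < a₂ ∧ b₂ ^ 2 + c₂ ^ 2 < a₂ ^ 2)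
    (hφ : 0 < |φ₁ - φ₂| ∧ |φ₁ - φ₂| < π)
    (g₁ g₂ : ℝ → ℝ)
    (hg₁ : g₁ = fun φ => -(1 / 2) * log (a₁ + b₁ * cos (2 * φ) + c₁ * sin (2 * φ)))
    (hg₂ : g₂ = fun φ => -(1 / 2) * log (a₂ + b₂ * cos (2 * φ) + c₂ * sin (2 * φ)))
    (h1 : g₁ φ₁ = g₂ φ₁) (h1' : deriv g₁ φ₁ = deriv g₂ φ₁) (h2 : g₁ φ₂ = g₂ φ₂) :
    g₁ = g₂ := by
  have hpos₁ φ := add_mul_cos_add_mul_sin_pos hK₁.1 hK₁.2 (2 * φ)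
  have hpos₂ φ := add_mul_cos_add_mul_sin_pos hK₂.1 hK₂.2 (2 * φ)
  subst hg₁ hg₂
  have hval₁ := eq_of_neg_half_mul_log_eq (hpos₁ φ₁) (hpos₂ φ₁) h1
  rw [(hasDerivAt_neg_half_log_add_mul_cos_two_mul φ₁ (hpos₁ φ₁)).deriv,
    (hasDerivAt_neg_half_log_add_mul_cos_two_mul φ₁ (hpos₂ φ₁)).deriv, hval₁,
    div_left_inj' (hpos₂ φ₁).ne', neg_inj] at h1'
  have hcos : cos (2 * φ₁ - 2 * φ₂) ≠ 1 := by
    rw [← mul_sub]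
    exact cos_two_mul_ne_one hφ.1 hφ.2
  obtain ⟨ha, hb, hc⟩ := eq_zero_of_double_zero_of_zero (a := a₁ - a₂) (b := b₁ - b₂)
    (c := c₁ - c₂) (by linear_combination hval₁) (by linear_combination h1')
    (by linear_combination eq_of_neg_half_mul_log_eq (hpos₁ φ₂) (hpos₂ φ₂) h2) hcos
  rw [sub_eq_zero.mp ha, sub_eq_zero.mp hb, sub_eq_zero.mp hc]
end

section
/- Let f be continuous and π-periodic and ḡ ∈ 𝒞. Suppose there exist points φ₁ < ψ₁ < φ₂ < ψ₂ < φ₁ + π such that f(φᵢ) − ḡ(φᵢ) = ‖f − ḡ‖_∞ and ḡ(ψᵢ) − f(ψᵢ) = ‖f − ḡ‖_∞ for i = 1, 2 (a second-order alternance). Then ḡ is the unique minimizer of ‖f − g‖_∞ over g ∈ 𝒞. -/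
open Real

/-- The family `𝒞` of logarithms of polar radii of origin-centered ellipses. -/
def EllipseLog : Set (ℝ → ℝ) :=
  {g | ∃ a b c : ℝ, 0 < a ∧ b ^ 2 + c ^ 2 < a ^ 2 ∧
    g = fun φ => -(1 / 2) * log (a + b * cos (2 * φ) + c * sin (2 * φ))}

/-- Sup-distance between two (π-periodic continuous) functions. -/
noncomputable def supDist (f g : ℝ → ℝ) : ℝ := ⨆ φ, |f φ - g φ|

lemma sin_triple (x y : ℝ) :
    sin (2*x) + sin (2*y) - sin (2*x + 2*y) = 4 * sin x * sin y * sin (x + y) := by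
  rw [sin_add (2*x) (2*y), sin_add x y, sin_two_mul, sin_two_mul,
    cos_two_mul, cos_two_mul]
  have hx := sin_sq_add_cos_sq x
  have hy := sin_sq_add_cos_sq y
  linear_combination (-(4 * sin x * cos x)) * hy - (4 * sin y * cos y) * hx

lemma s_pos (α β γ : ℝ) (h1 : α < β) (h2 : β < γ) (h3 : γ < α + 2*π) :
    0 < sin (β - α) + sin (γ - β) - sin (γ - α) := by
  have key := sin_triple ((β-α)/2) ((γ-β)/2)
  have e1 : 2 * ((β-α)/2) = β - α := by ring
  have e2 : 2 * ((γ-β)/2) = γ - β := by ring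
  have e3 : 2 * ((β-α)/2) + 2 * ((γ-β)/2) = γ - α := by ring
  have e4 : (β-α)/2 + (γ-β)/2 = (γ-α)/2 := by ring
  rw [e1, e2, e4, show β - α + (γ - β) = γ - α from by ring] at key
  rw [key]
  have pi_pos := Real.pi_pos
  have p1 : 0 < sin ((β-α)/2) :=
    sin_pos_of_pos_of_lt_pi (by linarith) (by linarith)
  have p2 : 0 < sin ((γ-β)/2) :=
    sin_pos_of_pos_of_lt_pi (by linarith) (by linarith)
  have p3 : 0 < sin ((γ-α)/2) :=
    sin_pos_of_pos_of_lt_pi (by linarith) (by linarith)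
  positivity

/-- Key Chebyshev-system lemma: a degree-one trigonometric polynomial with four
weak sign alternations in an open period is identically zero. -/
lemma trig_key (A B C θ₁ θ₂ θ₃ θ₄ : ℝ)
    (h12 : θ₁ < θ₂) (h23 : θ₂ < θ₃) (h34 : θ₃ < θ₄) (h41 : θ₄ < θ₁ + 2*π)
    (s1 : 0 ≤ A + B * cos θ₁ + C * sin θ₁)
    (s2 : A + B * cos θ₂ + C * sin θ₂ ≤ 0)
    (s3 : 0 ≤ A + B * cos θ₃ + C * sin θ₃)
    (s4 : A + B * cos θ₄ + C * sin θ₄ ≤ 0) :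
    A = 0 ∧ B = 0 ∧ C = 0 := by
  set T₁ := A + B * cos θ₁ + C * sin θ₁ with hT1
  set T₂ := A + B * cos θ₂ + C * sin θ₂ with hT2
  set T₃ := A + B * cos θ₃ + C * sin θ₃ with hT3
  set T₄ := A + B * cos θ₄ + C * sin θ₄ with hT4
  set μ₁ := sin (θ₃ - θ₂) + sin (θ₄ - θ₃) - sin (θ₄ - θ₂) with hμ1
  set μ₂ := sin (θ₃ - θ₁) + sin (θ₄ - θ₃) - sin (θ₄ - θ₁) with hμ2
  set μ₃ := sin (θ₂ - θ₁) + sin (θ₄ - θ₂) - sin (θ₄ - θ₁) with hμ3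
  set μ₄ := sin (θ₂ - θ₁) + sin (θ₃ - θ₂) - sin (θ₃ - θ₁) with hμ4
  have hp1 : 0 < μ₁ := s_pos θ₂ θ₃ θ₄ h23 h34 (by linarith)
  have hp2 : 0 < μ₂ := s_pos θ₁ θ₃ θ₄ (by linarith) h34 h41
  have hp3 : 0 < μ₃ := s_pos θ₁ θ₂ θ₄ h12 (by linarith) h41
  have hp4 : 0 < μ₄ := s_pos θ₁ θ₂ θ₃ h12 h23 (by linarith)
  -- the four-point vanishing identity (cofactor expansion of a singular 4×4 det)
  have hid : μ₁ * T₁ - μ₂ * T₂ + μ₃ * T₃ - μ₄ * T₄ = 0 := by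
    simp only [hT1, hT2, hT3, hT4, hμ1, hμ2, hμ3, hμ4, sin_sub]
    ring
  have n1 : 0 ≤ μ₁ * T₁ := mul_nonneg hp1.le s1
  have n2 : 0 ≤ -(μ₂ * T₂) := by
    rw [← mul_neg]; exact mul_nonneg hp2.le (by linarith)
  have n3 : 0 ≤ μ₃ * T₃ := mul_nonneg hp3.le s3
  have n4 : 0 ≤ -(μ₄ * T₄) := by
    rw [← mul_neg]; exact mul_nonneg hp4.le (by linarith)
  have z1 : T₁ = 0 := by
    have : μ₁ * T₁ = 0 := by linarith
    rcases mul_eq_zero.1 this with h | h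
    · exact absurd h hp1.ne'
    · exact h
  have z2 : T₂ = 0 := by
    have : μ₂ * T₂ = 0 := by linarith
    rcases mul_eq_zero.1 this with h | h
    · exact absurd h hp2.ne'
    · exact h
  have z3 : T₃ = 0 := by
    have : μ₃ * T₃ = 0 := by linarith
    rcases mul_eq_zero.1 this with h | h
    · exact absurd h hp3.ne'
    · exact h
  -- now solve the 3×3 linear system, using that μ₄ ≠ 0
  have e1 : A + B * cos θ₁ + C * sin θ₁ = 0 := z1
  have e2 : A + B * cos θ₂ + C * sin θ₂ = 0 := z2
  have e3 : A + B * cos θ₃ + C * sin θ₃ = 0 := z3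
  have hμ4' : μ₄ = sin θ₂ * cos θ₁ - cos θ₂ * sin θ₁ + (sin θ₃ * cos θ₂ - cos θ₃ * sin θ₂)
      - (sin θ₃ * cos θ₁ - cos θ₃ * sin θ₁) := by
    simp only [hμ4, sin_sub]
  have hA : A * μ₄ = 0 := by
    rw [hμ4']
    linear_combination (sin θ₃ * cos θ₂ - cos θ₃ * sin θ₂) * e1
      - (sin θ₃ * cos θ₁ - cos θ₃ * sin θ₁) * e2
      + (sin θ₂ * cos θ₁ - cos θ₂ * sin θ₁) * e3
  have hB : B * μ₄ = 0 := by
    rw [hμ4']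
    linear_combination (-(sin θ₃ - sin θ₂)) * e1 + (sin θ₃ - sin θ₁) * e2
      - (sin θ₂ - sin θ₁) * e3
  have hC : C * μ₄ = 0 := by
    rw [hμ4']
    linear_combination (cos θ₃ - cos θ₂) * e1 - (cos θ₃ - cos θ₁) * e2
      + (cos θ₂ - cos θ₁) * e3
  refine ⟨?_, ?_, ?_⟩
  · rcases mul_eq_zero.1 hA with h | h
    · exact h
    · exact absurd h hp4.ne'
  · rcases mul_eq_zero.1 hB with h | h
    · exact h
    · exact absurd h hp4.ne'
  · rcases mul_eq_zero.1 hC with h | h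
    · exact h
    · exact absurd h hp4.ne'

lemma radius_pos {a b c : ℝ} (ha : 0 < a) (habc : b ^ 2 + c ^ 2 < a ^ 2) (θ : ℝ) :
    0 < a + b * cos θ + c * sin θ := by
  nlinarith [sin_sq_add_cos_sq θ, sq_nonneg (b * sin θ - c * cos θ),
    sq_nonneg (a + b * cos θ + c * sin θ), sq_nonneg (b * cos θ + c * sin θ + a)]

lemma ellipse_continuous {g : ℝ → ℝ} (hg : g ∈ EllipseLog) : Continuous g := by
  obtain ⟨a, b, c, ha, habc, rfl⟩ := hg
  have hPc : Continuous fun φ : ℝ => a + b * cos (2 * φ) + c * sin (2 * φ) := by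
    fun_prop
  exact continuous_const.mul (hPc.log fun φ => (radius_pos ha habc (2 * φ)).ne')

lemma ellipse_periodic {g : ℝ → ℝ} (hg : g ∈ EllipseLog) : Function.Periodic g π := by
  obtain ⟨a, b, c, ha, habc, rfl⟩ := hg
  intro x
  have hc : 2 * (x + π) = 2 * x + 2 * π := by ring
  simp [hc, cos_add, sin_add]

lemma bdd_diff {f g : ℝ → ℝ} (hf : Continuous f) (hfp : Function.Periodic f π)
    (hg : Continuous g) (hgp : Function.Periodic g π) :
    BddAbove (Set.range fun φ => |f φ - g φ|) := by
  have hp : Function.Periodic (fun φ => |f φ - g φ|) π := fun x => by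
    simp [hfp x, hgp x]
  have hcont : Continuous fun φ => |f φ - g φ| := (hf.sub hg).abs
  rw [← hp.image_uIcc Real.pi_ne_zero 0]
  exact (isCompact_uIcc.image hcont).bddAbove

lemma le_supDist {f g : ℝ → ℝ} (hf : Continuous f) (hfp : Function.Periodic f π)
    (hg : Continuous g) (hgp : Function.Periodic g π) (φ : ℝ) :
    |f φ - g φ| ≤ supDist f g :=
  le_ciSup (bdd_diff hf hfp hg hgp) φ

/-- Core lemma: any `g ∈ 𝒞` at least as close to `f` as `gbar` must equal `gbar`. -/
lemma core (f : ℝ → ℝ) (hf : Continuous f) (hper : Function.Periodic f π)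
    (gbar : ℝ → ℝ) (hgbar : gbar ∈ EllipseLog)
    (φ₁ ψ₁ φ₂ ψ₂ : ℝ) (h1 : φ₁ < ψ₁) (h2 : ψ₁ < φ₂) (h3 : φ₂ < ψ₂) (h4 : ψ₂ < φ₁ + π)
    (hφ₁ : f φ₁ - gbar φ₁ = supDist f gbar) (hφ₂ : f φ₂ - gbar φ₂ = supDist f gbar)
    (hψ₁ : gbar ψ₁ - f ψ₁ = supDist f gbar) (hψ₂ : gbar ψ₂ - f ψ₂ = supDist f gbar)
    (g : ℝ → ℝ) (hg : g ∈ EllipseLog) (hle : supDist f g ≤ supDist f gbar) :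
    g = gbar := by
  obtain ⟨a, b, c, ha, habc, hgdef⟩ := hg
  obtain ⟨a', b', c', ha', habc', hgbardef⟩ := hgbar
  have hgc : Continuous g := ellipse_continuous ⟨a, b, c, ha, habc, hgdef⟩
  have hgp : Function.Periodic g π := ellipse_periodic ⟨a, b, c, ha, habc, hgdef⟩
  -- sign conditions at the four points
  have key : ∀ φ : ℝ, f φ - g φ ≤ supDist f gbar ∧ g φ - f φ ≤ supDist f gbar := by
    intro φ
    have h := le_supDist hf hper hgc hgp φ
    constructor
    · calc f φ - g φ ≤ |f φ - g φ| := le_abs_self _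
        _ ≤ supDist f g := h
        _ ≤ supDist f gbar := hle
    · calc g φ - f φ ≤ |f φ - g φ| := by rw [abs_sub_comm]; exact le_abs_self _
        _ ≤ supDist f g := h
        _ ≤ supDist f gbar := hle
  have hb1 : gbar φ₁ ≤ g φ₁ := by have := (key φ₁).1; linarith [hφ₁ ▸ this]
  have hb2 : gbar φ₂ ≤ g φ₂ := by have := (key φ₂).1; linarith [hφ₂ ▸ this]
  have hs1 : g ψ₁ ≤ gbar ψ₁ := by have := (key ψ₁).2; linarith [hψ₁ ▸ this]
  have hs2 : g ψ₂ ≤ gbar ψ₂ := by have := (key ψ₂).2; linarith [hψ₂ ▸ this]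
  -- translate to the radicands
  set P : ℝ → ℝ := fun φ => a + b * cos (2*φ) + c * sin (2*φ) with hP
  set P' : ℝ → ℝ := fun φ => a' + b' * cos (2*φ) + c' * sin (2*φ) with hP'
  have hPpos : ∀ φ, 0 < P φ := fun φ => radius_pos ha habc (2*φ)
  have hP'pos : ∀ φ, 0 < P' φ := fun φ => radius_pos ha' habc' (2*φ)
  have hcmp : ∀ φ, gbar φ ≤ g φ → P φ ≤ P' φ := by
    intro φ h
    rw [hgdef, hgbardef] at h
    simp only at h
    have hlog : log (P φ) ≤ log (P' φ) := by linarith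
    exact (log_le_log_iff (hPpos φ) (hP'pos φ)).1 hlog
  have hcmp' : ∀ φ, g φ ≤ gbar φ → P' φ ≤ P φ := by
    intro φ h
    rw [hgdef, hgbardef] at h
    simp only at h
    have hlog : log (P' φ) ≤ log (P φ) := by linarith
    exact (log_le_log_iff (hP'pos φ) (hPpos φ)).1 hlog
  have t1 : 0 ≤ (a' - a) + (b' - b) * cos (2*φ₁) + (c' - c) * sin (2*φ₁) := by
    have := hcmp φ₁ hb1; simp only [hP, hP'] at this; linarith
  have t2 : (a' - a) + (b' - b) * cos (2*ψ₁) + (c' - c) * sin (2*ψ₁) ≤ 0 := by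
    have := hcmp' ψ₁ hs1; simp only [hP, hP'] at this; linarith
  have t3 : 0 ≤ (a' - a) + (b' - b) * cos (2*φ₂) + (c' - c) * sin (2*φ₂) := by
    have := hcmp φ₂ hb2; simp only [hP, hP'] at this; linarith
  have t4 : (a' - a) + (b' - b) * cos (2*ψ₂) + (c' - c) * sin (2*ψ₂) ≤ 0 := by
    have := hcmp' ψ₂ hs2; simp only [hP, hP'] at this; linarith
  obtain ⟨hA, hB, hC⟩ := trig_key (a' - a) (b' - b) (c' - c)
    (2*φ₁) (2*ψ₁) (2*φ₂) (2*ψ₂)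
    (by linarith) (by linarith) (by linarith) (by linarith)
    t1 t2 t3 t4
  have haa : a = a' := by linarith
  have hbb : b = b' := by linarith
  have hcc : c = c' := by linarith
  rw [hgdef, hgbardef, haa, hbb, hcc]

/-- A second-order alternance characterises the unique best uniform approximation
from `𝒞`. -/
theorem alternance_implies_unique_min (f : ℝ → ℝ) (hf : Continuous f)
    (hper : Function.Periodic f π)
    (gbar : ℝ → ℝ) (hgbar : gbar ∈ EllipseLog)
    (φ₁ ψ₁ φ₂ ψ₂ : ℝ) (h1 : φ₁ < ψ₁) (h2 : ψ₁ < φ₂) (h3 : φ₂ < ψ₂) (h4 : ψ₂ < φ₁ + π)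
    (hφ₁ : f φ₁ - gbar φ₁ = supDist f gbar) (hφ₂ : f φ₂ - gbar φ₂ = supDist f gbar)
    (hψ₁ : gbar ψ₁ - f ψ₁ = supDist f gbar) (hψ₂ : gbar ψ₂ - f ψ₂ = supDist f gbar) :
    (∀ g ∈ EllipseLog, supDist f gbar ≤ supDist f g) ∧
    ∀ g ∈ EllipseLog, supDist f g = supDist f gbar → g = gbar := by
  constructor
  · intro g hg
    rcases le_or_gt (supDist f g) (supDist f gbar) with hle | hlt
    · have := core f hf hper gbar hgbar φ₁ ψ₁ φ₂ ψ₂ h1 h2 h3 h4 hφ₁ hφ₂ hψ₁ hψ₂ g hg hle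
      rw [this]
    · exact hlt.le
  · intro g hg heq
    exact core f hf hper gbar hgbar φ₁ ψ₁ φ₂ ψ₂ h1 h2 h3 h4 hφ₁ hφ₂ hψ₁ hψ₂ g hg heq.le
end

section
/- Let g ∈ 𝒞 and α < β < α + π, and let ε > 0. There exists g_ε ∈ 𝒞 with ‖g_ε − g‖_∞ < ε such that g_ε(φ) < g(φ) for all φ ∈ (α, β) and g_ε(φ) > g(φ) for all φ ∈ (β, α + π). -/
open Real

set_option maxHeartbeats 1000000

/-- Variation lemma: any `g ∈ 𝒞` can be perturbed, within `ε` in the sup norm, to an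
element of `𝒞` strictly below `g` on `(α, β)` and strictly above `g` on `(β, α + π)`. -/
theorem ellipseLog_variation (g : ℝ → ℝ) (hg : g ∈ EllipseLog)
    (α β : ℝ) (hαβ : α < β) (hβ : β < α + π) (ε : ℝ) (hε : 0 < ε) :
    ∃ gε ∈ EllipseLog, supDist gε g < ε ∧
      (∀ φ ∈ Set.Ioo α β, gε φ < g φ) ∧
      (∀ φ ∈ Set.Ioo β (α + π), g φ < gε φ) := by
  obtain ⟨a, b, c, ha, habc, rfl⟩ := hg
  set s : ℝ := Real.sqrt (b ^ 2 + c ^ 2) with hs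
  have hs0 : 0 ≤ s := Real.sqrt_nonneg _
  have hs2 : s ^ 2 = b ^ 2 + c ^ 2 := Real.sq_sqrt (by positivity)
  have hsa : s < a := by
    have h := Real.sqrt_lt_sqrt (by positivity) habc
    rwa [Real.sqrt_sq ha.le] at h
  set m : ℝ := a - s with hmdef
  have hm : 0 < m := by rw [hmdef]; linarith
  clear_value s m
  set t : ℝ := min m (m * ε) / 2 with ht
  have htmin : 0 < min m (m * ε) := lt_min hm (by positivity)
  have ht0 : 0 < t := by positivity
  have htm : t ≤ m / 2 := by
    have := min_le_left m (m * ε); rw [ht]; linarith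
  have htme : t ≤ m * ε / 2 := by
    have := min_le_right m (m * ε); rw [ht]; linarith
  clear_value t
  -- Cauchy–Schwarz bound
  have hCS : ∀ θ : ℝ, |b * Real.cos θ + c * Real.sin θ| ≤ s := by
    intro θ
    have hpy := Real.sin_sq_add_cos_sq θ
    have h1 := sq_nonneg (b * Real.sin θ - c * Real.cos θ)
    rw [abs_le]
    constructor
    · nlinarith [sq_nonneg (b * Real.cos θ + c * Real.sin θ + s)]
    · nlinarith [sq_nonneg (b * Real.cos θ + c * Real.sin θ - s)]
  -- perturbed coefficients
  set A : ℝ := a - t / 2 * Real.cos (β - α) with hA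
  set B : ℝ := b + t / 2 * Real.cos (α + β) with hB
  set C : ℝ := c + t / 2 * Real.sin (α + β) with hC
  clear_value A B C
  have hAlow : a - t / 2 ≤ A := by
    have := Real.cos_le_one (β - α); rw [hA]; nlinarith
  have hApos : 0 < A := by linarith
  -- key trig identity
  have hkey : ∀ φ : ℝ, A + B * Real.cos (2 * φ) + C * Real.sin (2 * φ)
      = (a + b * Real.cos (2 * φ) + c * Real.sin (2 * φ))
        - t * (Real.sin (φ - α) * Real.sin (φ - β)) := by
    intro φ
    have e1 : Real.cos (β - α) = Real.cos ((φ - α) - (φ - β)) := by congr 1; ring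
    have e2 : Real.cos (2 * φ) * Real.cos (α + β) + Real.sin (2 * φ) * Real.sin (α + β)
        = Real.cos ((φ - α) + (φ - β)) := by
      rw [← Real.cos_sub]; congr 1; ring
    have h : Real.sin (φ - α) * Real.sin (φ - β)
        = (Real.cos (β - α) - (Real.cos (2 * φ) * Real.cos (α + β)
            + Real.sin (2 * φ) * Real.sin (α + β))) / 2 := by
      rw [e1, e2, Real.cos_sub, Real.cos_add]; ring
    rw [hA, hB, hC, h]; ring
  -- lower bounds on the radicands
  have hrlow : ∀ φ : ℝ, m ≤ a + b * Real.cos (2 * φ) + c * Real.sin (2 * φ) := by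
    intro φ
    have := (abs_le.mp (hCS (2 * φ))).1
    rw [hmdef]; linarith
  have hrpos : ∀ φ : ℝ, 0 < a + b * Real.cos (2 * φ) + c * Real.sin (2 * φ) :=
    fun φ => lt_of_lt_of_le hm (hrlow φ)
  have hprod1 : ∀ φ : ℝ, |Real.sin (φ - α) * Real.sin (φ - β)| ≤ 1 := by
    intro φ
    rw [abs_mul]
    exact mul_le_one₀ (Real.abs_sin_le_one _) (abs_nonneg _) (Real.abs_sin_le_one _)
  have hrεlow : ∀ φ : ℝ, m / 2 ≤ A + B * Real.cos (2 * φ) + C * Real.sin (2 * φ) := by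
    intro φ
    rw [hkey φ]
    have h1 := hrlow φ
    have h2 := (abs_le.mp (hprod1 φ)).2
    nlinarith
  have hrεpos : ∀ φ : ℝ, 0 < A + B * Real.cos (2 * φ) + C * Real.sin (2 * φ) :=
    fun φ => lt_of_lt_of_le (by linarith) (hrεlow φ)
  -- membership second condition
  have hBC : B ^ 2 + C ^ 2 < A ^ 2 := by
    have hpy := Real.sin_sq_add_cos_sq (α + β)
    have hbcs := (abs_le.mp (hCS (α + β))).2
    have h1 : 0 < a - t / 2 := by linarith
    have hu : (t / 2) ^ 2 * (Real.sin (α + β) ^ 2 + Real.cos (α + β) ^ 2)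
        = (t / 2) ^ 2 := by rw [hpy]; ring
    have hbcs2 : t / 2 * (b * Real.cos (α + β) + c * Real.sin (α + β)) ≤ t / 2 * s :=
      mul_le_mul_of_nonneg_left hbcs (by positivity)
    have hexp : B ^ 2 + C ^ 2 = b ^ 2 + c ^ 2
        + t * (b * Real.cos (α + β) + c * Real.sin (α + β))
        + (t / 2) ^ 2 * (Real.sin (α + β) ^ 2 + Real.cos (α + β) ^ 2) := by
      rw [hB, hC]; ring
    have h2 : B ^ 2 + C ^ 2 ≤ (s + t / 2) ^ 2 := by
      have hrhs : (s + t / 2) ^ 2 = s ^ 2 + t * s + (t / 2) ^ 2 := by ring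
      linarith [hexp, hrhs, hu, hbcs2, hs2]
    have h3 : (s + t / 2) ^ 2 < (a - t / 2) ^ 2 := by
      have hfac : (a - t / 2) ^ 2 - (s + t / 2) ^ 2
          = ((a - t / 2) - (s + t / 2)) * ((a - t / 2) + (s + t / 2)) := by ring
      have hpos := mul_pos (show (0:ℝ) < (a - t / 2) - (s + t / 2) by linarith)
        (show (0:ℝ) < (a - t / 2) + (s + t / 2) by linarith)
      linarith [hfac, hpos]
    have h4 : (a - t / 2) ^ 2 ≤ A ^ 2 := pow_le_pow_left₀ h1.le hAlow 2
    linarith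
  -- log difference bound helper
  have hlog : ∀ x y : ℝ, 0 < x → 0 < y → Real.log x - Real.log y ≤ (x - y) / y := by
    intro x y hx hy
    have h := Real.log_le_sub_one_of_pos (show (0:ℝ) < x / y by positivity)
    rw [Real.log_div hx.ne' hy.ne'] at h
    have : x / y - 1 = (x - y) / y := by field_simp
    linarith [this ▸ h]
  refine ⟨fun φ => -(1 / 2) * Real.log (A + B * Real.cos (2 * φ) + C * Real.sin (2 * φ)),
    ⟨A, B, C, hApos, hBC, rfl⟩, ?_, ?_, ?_⟩
  · -- supDist bound
    have hpt : ∀ φ : ℝ,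
        |(-(1 / 2) * Real.log (A + B * Real.cos (2 * φ) + C * Real.sin (2 * φ)))
          - (-(1 / 2) * Real.log (a + b * Real.cos (2 * φ) + c * Real.sin (2 * φ)))| ≤ ε / 2 := by
      intro φ
      set r : ℝ := a + b * Real.cos (2 * φ) + c * Real.sin (2 * φ) with hr
      set rε : ℝ := A + B * Real.cos (2 * φ) + C * Real.sin (2 * φ) with hrε
      have hrp : 0 < r := hrpos φ
      have hrεp : 0 < rε := hrεpos φ
      have hrm : m ≤ r := hrlow φ
      have hrεm : m / 2 ≤ rε := hrεlow φ
      have hdiff : |rε - r| ≤ t := by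
        rw [hrε, hkey φ, hr]
        have h := hprod1 φ
        rw [abs_le] at h ⊢
        constructor <;> nlinarith [h.1, h.2]
      have hlog1 : Real.log rε - Real.log r ≤ 2 * t / m := by
        have h1 := hlog rε r hrεp hrp
        have h2 : (rε - r) / r ≤ 2 * t / m := by
          rw [div_le_div_iff₀ hrp hm]
          have := (abs_le.mp hdiff).2
          nlinarith
        linarith
      have hlog2 : Real.log r - Real.log rε ≤ 2 * t / m := by
        have h1 := hlog r rε hrp hrεp
        have h2 : (r - rε) / rε ≤ 2 * t / m := by
          rw [div_le_div_iff₀ hrεp hm]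
          have := (abs_le.mp hdiff).1
          nlinarith
        linarith
      have habs : |Real.log rε - Real.log r| ≤ 2 * t / m := abs_le.mpr ⟨by linarith, hlog1⟩
      have heq : (-(1 / 2) * Real.log rε) - (-(1 / 2) * Real.log r)
          = -(1 / 2) * (Real.log rε - Real.log r) := by ring
      rw [heq, abs_mul]
      have : |(-(1 / 2) : ℝ)| = 1 / 2 := by norm_num
      rw [this]
      have htm2 : 2 * t / m ≤ ε := by
        rw [div_le_iff₀ hm]; nlinarith
      linarith [abs_nonneg (Real.log rε - Real.log r)]
    calc supDist _ _ ≤ ε / 2 := ciSup_le hpt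
      _ < ε := by linarith
  · -- below on (α, β)
    intro φ hφ
    obtain ⟨h1, h2⟩ := hφ
    have hsin1 : 0 < Real.sin (φ - α) :=
      Real.sin_pos_of_pos_of_lt_pi (by linarith) (by linarith)
    have hsin2 : Real.sin (φ - β) < 0 := by
      have h3 : 0 < Real.sin (β - φ) :=
        Real.sin_pos_of_pos_of_lt_pi (by linarith) (by linarith)
      have h4 : Real.sin (φ - β) = -Real.sin (β - φ) := by
        rw [← Real.sin_neg]; congr 1; ring
      linarith [h4 ▸ neg_neg (Real.sin (β - φ))]
    have hlt : a + b * Real.cos (2 * φ) + c * Real.sin (2 * φ)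
        < A + B * Real.cos (2 * φ) + C * Real.sin (2 * φ) := by
      rw [hkey φ]
      nlinarith [mul_pos hsin1 (neg_pos.mpr hsin2)]
    have := Real.log_lt_log (hrpos φ) hlt
    simp only
    linarith
  · -- above on (β, α + π)
    intro φ hφ
    obtain ⟨h1, h2⟩ := hφ
    have hsin1 : 0 < Real.sin (φ - α) :=
      Real.sin_pos_of_pos_of_lt_pi (by linarith) (by linarith)
    have hsin2 : 0 < Real.sin (φ - β) :=
      Real.sin_pos_of_pos_of_lt_pi (by linarith) (by linarith)
    have hlt : A + B * Real.cos (2 * φ) + C * Real.sin (2 * φ)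
        < a + b * Real.cos (2 * φ) + c * Real.sin (2 * φ) := by
      rw [hkey φ]
      nlinarith [mul_pos hsin1 hsin2]
    have := Real.log_lt_log (hrεpos φ) hlt
    simp only
    linarith
end

section
/- Let f be continuous and π-periodic and suppose ḡ ∈ 𝒞 minimizes ‖f − g‖_∞ over g ∈ 𝒞. Then there exist points φ₁ < ψ₁ < φ₂ < ψ₂ < φ₁ + π with f(φᵢ) − ḡ(φᵢ) = ‖f − ḡ‖_∞ and ḡ(ψᵢ) − f(ψᵢ) = ‖f − ḡ‖_∞ for i = 1, 2. -/
open Real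

/-!
Shifting `g ∈ EllipseLog` by a constant keeps it in the family, so at a best
approximation `ḡ` the error `r = f - ḡ` attains both `d = ‖f - ḡ‖` and `-d`. If there were no
alternance, the closed π-periodic sets `{r = d}` and `{r = -d}` would lie in complementary arcs
`[z₂, z₁ + π]` and `[z₁, z₂]`, hence be separated by the sign of
`q φ = -2 sin (φ - z₁) sin (φ - z₂)`, which is again of the form `α + β cos 2φ + γ sin 2φ`.
Replacing the quadratic form `Q` of `ḡ` by `Q + t q` for small `t > 0` keeps it positive and
moves the error by `½ log (1 + t q / Q)`, whose sign is that of `q`: the error drops near its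
maxima, rises near its minima and barely moves elsewhere, so `‖f - g‖ < d` for the new `g`.
-/

open Function Set

namespace Function.Periodic

variable {f : ℝ → ℝ} {c : ℝ}

theorem exists_forall_ge_of_continuous (hp : Periodic f c) (hc : c ≠ 0) (hf : Continuous f) :
    ∃ x, ∀ y, f y ≤ f x := by
  obtain ⟨_, ⟨x, rfl⟩, hx⟩ := (hp.compact_of_continuous hc hf).exists_isGreatest (range_nonempty f)
  exact ⟨x, fun y => hx ⟨y, rfl⟩⟩

theorem exists_forall_le_of_continuous (hp : Periodic f c) (hc : c ≠ 0) (hf : Continuous f) :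
    ∃ x, ∀ y, f x ≤ f y := by
  obtain ⟨_, ⟨x, rfl⟩, hx⟩ := (hp.compact_of_continuous hc hf).exists_isLeast (range_nonempty f)
  exact ⟨x, fun y => hx ⟨y, rfl⟩⟩

theorem exists_pos_forall_le_of_continuous (hp : Periodic f c) (hc : c ≠ 0) (hf : Continuous f)
    (hpos : ∀ x, 0 < f x) : ∃ ε > 0, ∀ x, ε ≤ f x :=
  let ⟨x, hx⟩ := hp.exists_forall_le_of_continuous hc hf
  ⟨f x, hpos x, hx⟩

end Function.Periodic

section supDist

variable {f g : ℝ → ℝ}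

theorem supDist_le {C : ℝ} (h : ∀ x, |f x - g x| ≤ C) : supDist f g ≤ C :=
  ciSup_le h

theorem exists_abs_sub_eq_supDist {c : ℝ} (hc : c ≠ 0) (hf : Continuous f) (hg : Continuous g)
    (hfp : Periodic f c) (hgp : Periodic g c) :
    ∃ x, |f x - g x| = supDist f g ∧ ∀ y, |f y - g y| ≤ supDist f g := by
  obtain ⟨x, hx⟩ := ((hfp.sub hgp).comp abs).exists_forall_ge_of_continuous hc (hf.sub hg).abs
  have hsup : |f x - g x| = supDist f g :=
    le_antisymm (le_ciSup ⟨_, forall_mem_range.2 hx⟩ x) (supDist_le hx)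
  exact ⟨x, hsup, hsup ▸ hx⟩

theorem supDist_lt {c C : ℝ} (hc : c ≠ 0) (hf : Continuous f) (hg : Continuous g)
    (hfp : Periodic f c) (hgp : Periodic g c) (h : ∀ x, |f x - g x| < C) : supDist f g < C :=
  let ⟨x, hx, _⟩ := exists_abs_sub_eq_supDist hc hf hg hfp hgp
  hx ▸ h x

end supDist

/-- The quadratic form `(a + b) x² + 2c xy + (a - b) y²` of an ellipse at `(cos φ, sin φ)`, so that
`-(1/2) log (ellipseQuad a b c φ)` is the logarithm of its polar radius. -/
noncomputable def ellipseQuad (a b c φ : ℝ) : ℝ := a + b * cos (2 * φ) + c * sin (2 * φ)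

theorem abs_mul_cos_add_mul_sin_le (b c θ : ℝ) : |b * cos θ + c * sin θ| ≤ √(b ^ 2 + c ^ 2) :=
  abs_le_sqrt <| by nlinarith [sin_sq_add_cos_sq θ, sq_nonneg (b * sin θ - c * cos θ)]

theorem exists_mul_cos_add_mul_sin_eq (b c : ℝ) :
    ∃ θ, b * cos θ + c * sin θ = -√(b ^ 2 + c ^ 2) := by
  set z : ℂ := ⟨-b, -c⟩
  by_cases hz : z = 0
  · obtain ⟨rfl, rfl⟩ : b = 0 ∧ c = 0 := by simpa [z, Complex.ext_iff] using hz
    exact ⟨0, by simp⟩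
  have hnorm : ‖z‖ = √(b ^ 2 + c ^ 2) := by simp [z, Complex.norm_eq_sqrt_sq_add_sq]
  have hpos : 0 < √(b ^ 2 + c ^ 2) := hnorm ▸ norm_pos_iff.2 hz
  refine ⟨z.arg, ?_⟩
  rw [Complex.cos_arg hz, Complex.sin_arg, hnorm]
  field_simp
  rw [sq_sqrt (by positivity)]
  simp only [z]; ring

namespace ellipseQuad

variable (a b c : ℝ)

theorem periodic : Periodic (ellipseQuad a b c) π := fun φ => by
  simp only [ellipseQuad, mul_add, cos_add_two_pi, sin_add_two_pi]

theorem continuous : Continuous (ellipseQuad a b c) := by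
  unfold ellipseQuad; fun_prop

theorem sub_sqrt_le (φ : ℝ) : a - √(b ^ 2 + c ^ 2) ≤ ellipseQuad a b c φ := by
  have := abs_mul_cos_add_mul_sin_le b c (2 * φ)
  rw [ellipseQuad, add_assoc]; linarith [neg_abs_le (b * cos (2 * φ) + c * sin (2 * φ))]

theorem abs_le (φ : ℝ) : |ellipseQuad a b c φ| ≤ |a| + √(b ^ 2 + c ^ 2) := by
  rw [ellipseQuad, add_assoc]
  linarith [abs_add_le a (b * cos (2 * φ) + c * sin (2 * φ)),
    abs_mul_cos_add_mul_sin_le b c (2 * φ)]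

theorem exists_eq_sub_sqrt : ∃ φ, ellipseQuad a b c φ = a - √(b ^ 2 + c ^ 2) := by
  obtain ⟨θ, hθ⟩ := exists_mul_cos_add_mul_sin_eq b c
  refine ⟨θ / 2, ?_⟩
  rw [ellipseQuad, mul_div_cancel₀ θ two_ne_zero, add_assoc, hθ, sub_eq_add_neg]

theorem forall_pos_iff : (∀ φ, 0 < ellipseQuad a b c φ) ↔ 0 < a ∧ b ^ 2 + c ^ 2 < a ^ 2 := by
  have : (∀ φ, 0 < ellipseQuad a b c φ) ↔ √(b ^ 2 + c ^ 2) < a := by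
    obtain ⟨φ, hφ⟩ := exists_eq_sub_sqrt a b c
    exact ⟨fun h => sub_pos.1 (hφ ▸ h φ), fun h φ => (sub_pos.2 h).trans_le (sub_sqrt_le a b c φ)⟩
  rw [this]
  exact ⟨fun h => ⟨(sqrt_nonneg _).trans_lt h, (sqrt_lt' ((sqrt_nonneg _).trans_lt h)).1 h⟩,
    fun h => (sqrt_lt' h.1).2 h.2⟩

theorem add_const_mul (α β γ t φ : ℝ) :
    ellipseQuad a b c φ + t * ellipseQuad α β γ φ
      = ellipseQuad (a + t * α) (b + t * β) (c + t * γ) φ := by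
  simp only [ellipseQuad]; ring

theorem const_mul (t φ : ℝ) : t * ellipseQuad a b c φ = ellipseQuad (t * a) (t * b) (t * c) φ := by
  simp only [ellipseQuad]; ring

end ellipseQuad

theorem mem_ellipseLog_iff {g : ℝ → ℝ} : g ∈ EllipseLog ↔
    ∃ a b c, (∀ φ, 0 < ellipseQuad a b c φ) ∧
      g = fun φ => -(1 / 2) * log (ellipseQuad a b c φ) := by
  simp only [ellipseQuad.forall_pos_iff, and_assoc]; rfl

section EllipseLog

variable {g : ℝ → ℝ}

theorem continuous_of_mem_ellipseLog (hg : g ∈ EllipseLog) : Continuous g := by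
  obtain ⟨a, b, c, hpos, rfl⟩ := mem_ellipseLog_iff.1 hg
  exact continuous_const.mul ((ellipseQuad.continuous a b c).log fun φ => (hpos φ).ne')

theorem periodic_of_mem_ellipseLog (hg : g ∈ EllipseLog) : Periodic g π := by
  obtain ⟨a, b, c, -, rfl⟩ := mem_ellipseLog_iff.1 hg
  exact (ellipseQuad.periodic a b c).comp fun x => -(1 / 2) * log x

/-- Adding `t` amounts to scaling the ellipse by `exp t`. -/
theorem add_const_mem_ellipseLog (hg : g ∈ EllipseLog) (t : ℝ) :
    (fun φ => g φ + t) ∈ EllipseLog := by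
  obtain ⟨a, b, c, hpos, rfl⟩ := mem_ellipseLog_iff.1 hg
  have hs : 0 < exp (-2 * t) := exp_pos _
  refine mem_ellipseLog_iff.2
    ⟨_, _, _, fun φ => ellipseQuad.const_mul a b c _ φ ▸ mul_pos hs (hpos φ), funext fun φ => ?_⟩
  rw [← ellipseQuad.const_mul, log_mul hs.ne' (hpos φ).ne', log_exp]
  ring

end EllipseLog

def HasAlternance (A B : Set ℝ) : Prop :=
  ∃ φ₁ ψ₁ φ₂ ψ₂, φ₁ < ψ₁ ∧ ψ₁ < φ₂ ∧ φ₂ < ψ₂ ∧ ψ₂ < φ₁ + π ∧ φ₁ ∈ A ∧ ψ₁ ∈ B ∧ φ₂ ∈ A ∧ ψ₂ ∈ B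

section Separation

variable {A B : Set ℝ}

theorem exists_gap (hAc : IsClosed A) (hAp : Periodic (· ∈ A) π) {a b : ℝ} (ha : a ∈ A)
    (hb : b ∉ A) :
    ∃ a₁ ∈ A, ∃ a₂ ∈ A, a₁ < b ∧ b < a₂ ∧ a₂ ≤ a₁ + π ∧ ∀ x ∈ Ioo a₁ a₂, x ∉ A := by
  obtain ⟨a₀, ⟨ha₀l, ha₀r⟩, ha₀⟩ := hAp.exists_mem_Ico pi_pos a (b - π)
  replace ha₀ : a₀ ∈ A := ha₀ ▸ ha
  have hl : BddAbove (A ∩ Iic b) := ⟨b, fun _ hx => hx.2⟩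
  have hr : BddBelow (A ∩ Ici b) := ⟨b, fun _ hx => hx.2⟩
  have ha₀b : a₀ ∈ A ∩ Iic b := ⟨ha₀, mem_Iic.2 (by linarith)⟩
  obtain ⟨ha₁, ha₁b⟩ := (hAc.inter isClosed_Iic).csSup_mem ⟨a₀, ha₀b⟩ hl
  obtain ⟨ha₂, ha₂b⟩ := (hAc.inter isClosed_Ici).csInf_mem
    ⟨a₀ + π, (hAp a₀).mpr ha₀, mem_Ici.2 (by linarith)⟩ hr
  set a₁ := sSup (A ∩ Iic b)
  set a₂ := sInf (A ∩ Ici b)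
  have ha₀₁ : a₀ ≤ a₁ := le_csSup hl ha₀b
  refine ⟨a₁, ha₁, a₂, ha₂, lt_of_le_of_ne ha₁b (ne_of_mem_of_not_mem ha₁ hb),
    lt_of_le_of_ne ha₂b (ne_of_mem_of_not_mem ha₂ hb).symm,
    csInf_le hr ⟨(hAp a₁).mpr ha₁, mem_Ici.2 (by linarith)⟩, fun x ⟨hx₁, hx₂⟩ hx => ?_⟩
  rcases le_total x b with hxb | hxb
  · exact (le_csSup hl ⟨hx, hxb⟩).not_gt hx₁
  · exact (csInf_le hr ⟨hx, hxb⟩).not_gt hx₂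

theorem exists_separating_Icc (hAc : IsClosed A) (hBc : IsClosed B) (hAp : Periodic (· ∈ A) π)
    (hBp : Periodic (· ∈ B) π) (hAB : Disjoint A B) {a b : ℝ} (ha : a ∈ A) (hb : b ∈ B)
    (hno : ¬ HasAlternance A B) :
    ∃ z₁ z₂, z₁ < z₂ ∧ z₂ < z₁ + π ∧ (∀ x ∈ Icc z₁ z₂, x ∉ A) ∧ ∀ x ∈ Icc z₂ (z₁ + π), x ∉ B := by
  obtain ⟨a₁, ha₁, a₂, ha₂, ha₁b, hba₂, ha₂₁, hgapA⟩ :=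
    exists_gap hAc hAp ha (disjoint_right.1 hAB hb)
  have hgapB : ∀ x ∈ Ioo a₂ (a₁ + π), x ∉ B := fun x ⟨hx₁, hx₂⟩ hx =>
    hno ⟨a₂, x, a₁ + π, b + π, hx₁, hx₂, by linarith, by linarith, ha₂, hx, (hAp a₁).mpr ha₁,
      (hBp b).mpr hb⟩
  have hW : IsCompact (B ∩ Icc a₁ a₂) := isCompact_Icc.inter_left hBc
  have hbW : b ∈ B ∩ Icc a₁ a₂ := ⟨hb, ha₁b.le, hba₂.le⟩
  obtain ⟨hw₁, hw₁a, -⟩ := hW.sInf_mem ⟨b, hbW⟩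
  obtain ⟨hw₂, -, hw₂a⟩ := hW.sSup_mem ⟨b, hbW⟩
  set w₁ := sInf (B ∩ Icc a₁ a₂)
  set w₂ := sSup (B ∩ Icc a₁ a₂)
  have hw₁b : w₁ ≤ b := csInf_le hW.bddBelow hbW
  have hbw₂ : b ≤ w₂ := le_csSup hW.bddAbove hbW
  have ha₁w₁ : a₁ < w₁ := lt_of_le_of_ne hw₁a (hAB.ne_of_mem ha₁ hw₁)
  have hw₂a₂ : w₂ < a₂ := lt_of_le_of_ne hw₂a (hAB.ne_of_mem ha₂ hw₂).symm
  refine ⟨(a₁ + w₁) / 2, (w₂ + a₂) / 2, by linarith, by linarith,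
    fun x ⟨hx₁, hx₂⟩ => hgapA x ⟨by linarith, by linarith⟩, fun x ⟨hx₁, hx₂⟩ hx => ?_⟩
  rcases lt_or_ge x a₂ with hxa₂ | ha₂x
  · exact (le_csSup hW.bddAbove ⟨hx, by linarith, hxa₂.le⟩).not_gt (by linarith)
  rcases le_or_gt x (a₁ + π) with hxa₁ | ha₁x
  · rcases ha₂x.eq_or_lt with rfl | ha₂x
    · exact hAB.ne_of_mem ha₂ hx rfl
    rcases hxa₁.eq_or_lt with rfl | hxa₁
    · exact hAB.ne_of_mem ((hAp a₁).mpr ha₁) hx rfl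
    · exact hgapB x ⟨ha₂x, hxa₁⟩ hx
  · have hx' : x - π ∈ B := (hBp.sub_eq x).symm ▸ hx
    exact (csInf_le hW.bddBelow ⟨hx', by linarith, by linarith⟩).not_gt (by linarith)

theorem ellipseQuad_eq_neg_two_mul_sin_mul_sin (z₁ z₂ x : ℝ) :
    ellipseQuad (-cos (z₂ - z₁)) (cos (z₁ + z₂)) (sin (z₁ + z₂)) x
      = -2 * (sin (x - z₁) * sin (x - z₂)) := by
  have h := cos_sub_cos ((x - z₁) + (x - z₂)) ((x - z₁) - (x - z₂))
  rw [show (x - z₁ + (x - z₂) + (x - z₁ - (x - z₂))) / 2 = x - z₁ by ring,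
    show (x - z₁ + (x - z₂) - (x - z₁ - (x - z₂))) / 2 = x - z₂ by ring,
    show x - z₁ + (x - z₂) = 2 * x - (z₁ + z₂) by ring,
    show x - z₁ - (x - z₂) = z₂ - z₁ by ring, cos_sub] at h
  rw [ellipseQuad]; linarith

theorem sin_sub_mul_sin_sub_neg {z₁ z₂ x : ℝ} (h₁ : z₁ < x) (h₂ : x < z₂) (h₂₁ : z₂ < z₁ + π) :
    sin (x - z₁) * sin (x - z₂) < 0 :=
  mul_neg_of_pos_of_neg (sin_pos_of_pos_of_lt_pi (by linarith) (by linarith))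
    (sin_neg_of_neg_of_neg_pi_lt (by linarith) (by linarith))

theorem sin_sub_mul_sin_sub_pos {z₁ z₂ x : ℝ} (h₁₂ : z₁ < z₂) (h₂ : z₂ < x) (h₁ : x < z₁ + π) :
    0 < sin (x - z₁) * sin (x - z₂) :=
  mul_pos (sin_pos_of_pos_of_lt_pi (by linarith) (by linarith))
    (sin_pos_of_pos_of_lt_pi (by linarith) (by linarith))

/-- The separating form is `-2 sin (φ - z₁) sin (φ - z₂)` for the arcs of
`exists_separating_Icc`. -/
theorem exists_ellipseQuad_separating (hAc : IsClosed A) (hBc : IsClosed B)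
    (hAp : Periodic (· ∈ A) π) (hBp : Periodic (· ∈ B) π) (hAB : Disjoint A B) {a b : ℝ}
    (ha : a ∈ A) (hb : b ∈ B) (hno : ¬ HasAlternance A B) :
    ∃ α β γ, (∀ x, 0 ≤ ellipseQuad α β γ x → x ∉ A) ∧ ∀ x, ellipseQuad α β γ x ≤ 0 → x ∉ B := by
  obtain ⟨z₁, z₂, h₁₂, h₂₁, hA, hB⟩ := exists_separating_Icc hAc hBc hAp hBp hAB ha hb hno
  set q := ellipseQuad (-cos (z₂ - z₁)) (cos (z₁ + z₂)) (sin (z₁ + z₂))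
  have hq : Periodic q π := ellipseQuad.periodic _ _ _
  have hq_eq : ∀ y, q y = -2 * (sin (y - z₁) * sin (y - z₂)) :=
    ellipseQuad_eq_neg_two_mul_sin_mul_sin z₁ z₂
  refine ⟨-cos (z₂ - z₁), cos (z₁ + z₂), sin (z₁ + z₂), fun x (hqx : 0 ≤ q x) => ?_,
    fun x (hqx : q x ≤ 0) => ?_⟩
  · obtain ⟨y, ⟨hy₁, hy₂⟩, hxy⟩ := (show Periodic (fun x => (q x, x ∈ A)) π from
      fun x => Prod.ext (hq x) (hAp x)).exists_mem_Ico pi_pos x z₁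
    obtain ⟨hqxy, hAxy⟩ := Prod.mk.inj hxy
    have hyz₂ : y ≤ z₂ := not_lt.1 fun hzy => by
      linarith [hq_eq y, sin_sub_mul_sin_sub_pos h₁₂ hzy hy₂]
    exact hAxy ▸ hA y ⟨hy₁, hyz₂⟩
  · obtain ⟨y, ⟨hy₁, hy₂⟩, hxy⟩ := (show Periodic (fun x => (q x, x ∈ B)) π from
      fun x => Prod.ext (hq x) (hBp x)).exists_mem_Ico pi_pos x z₂
    obtain ⟨hqxy, hBxy⟩ := Prod.mk.inj hxy
    have hyz₁ : y ≤ z₁ + π := not_lt.1 fun hzy => by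
      linarith [hq.sub_eq y, hq_eq (y - π),
        sin_sub_mul_sin_sub_neg (x := y - π) (by linarith) (by linarith) h₂₁]
    exact hBxy ▸ hB y ⟨hy₁, hyz₁⟩

end Separation

theorem abs_log_one_add_le {s : ℝ} (hs : |s| ≤ 1 / 2) : |log (1 + s)| ≤ 2 * |s| := by
  have h := abs_log_sub_add_sum_range_le (x := -s) (by rw [abs_neg]; linarith) 0
  simp only [Finset.range_zero, Finset.sum_empty, zero_add, sub_neg_eq_add, abs_neg,
    pow_one] at h
  calc |log (1 + s)| ≤ |s| / (1 - |s|) := add_comm s 1 ▸ h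
    _ ≤ 2 * |s| := by rw [div_le_iff₀ (by linarith)]; nlinarith [abs_nonneg s]

theorem abs_add_half_log_one_add_lt {r s d η : ℝ} (hr : |r| ≤ d) (hs : |s| < η) (hη : η ≤ 1 / 2)
    (hmax : d - η < r → s < 0) (hmin : r < -d + η → 0 < s) : |r + 1 / 2 * log (1 + s)| < d := by
  have hlog := abs_log_one_add_le (hs.le.trans hη)
  have hs1 : 0 < 1 + s := by linarith [neg_abs_le s]
  rw [abs_le] at hr
  rw [abs_lt]
  constructor
  · by_cases h : r < -d + η
    · linarith [log_pos (by linarith [hmin h] : 1 < 1 + s)]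
    · linarith [neg_abs_le (log (1 + s))]
  · by_cases h : d - η < r
    · linarith [log_neg hs1 (by linarith [hmax h] : 1 + s < 1)]
    · linarith [le_abs_self (log (1 + s))]

theorem exists_pos_forall_abs_mul_div_lt {Q q : ℝ → ℝ} {m M η : ℝ} (hm : 0 < m)
    (hQ : ∀ x, m ≤ Q x) (hq : ∀ x, |q x| ≤ M) (hη : 0 < η) :
    ∃ t > 0, ∀ x, |t * q x / Q x| < η := by
  have hM : 0 < M + 1 := by linarith [(abs_nonneg _).trans (hq 0)]
  refine ⟨m * η / (M + 1), by positivity, fun x => ?_⟩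
  have hQx : 0 < Q x := hm.trans_le (hQ x)
  rw [abs_div, abs_mul, abs_of_pos (by positivity : 0 < m * η / (M + 1)), abs_of_pos hQx,
    div_lt_iff₀ hQx]
  calc m * η / (M + 1) * |q x| ≤ m * η / (M + 1) * M := by gcongr; exact hq x
    _ < m * η / (M + 1) * (M + 1) := by gcongr; linarith
    _ = m * η := by field_simp
    _ ≤ η * Q x := by rw [mul_comm]; gcongr; exact hQ x

theorem Function.Periodic.exists_pos_forall_lt_imp_neg {r q : ℝ → ℝ} {c d : ℝ} (hc : c ≠ 0)
    (hr : Continuous r) (hq : Continuous q) (hrp : Periodic r c) (hqp : Periodic q c)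
    (h : ∀ x, 0 ≤ q x → r x < d) : ∃ η > 0, ∀ x, d - η < r x → q x < 0 := by
  have hp : Periodic (fun x => max (d - r x) (-q x)) c := fun x => by simp only [hrp x, hqp x]
  obtain ⟨η, hη, hle⟩ := hp.exists_pos_forall_le_of_continuous hc
    ((continuous_const.sub hr).max hq.neg) fun x => by
      rcases le_or_gt 0 (q x) with hqx | hqx
      · exact lt_max_of_lt_left (sub_pos.2 (h x hqx))
      · exact lt_max_of_lt_right (neg_pos.2 hqx)
  refine ⟨η, hη, fun x hx => ?_⟩
  rcases le_max_iff.1 (hle x) with h' | h'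
  · linarith
  · linarith

/-- The better approximation has quadratic form `ellipseQuad a b c + t • ellipseQuad α β γ`, where
`ellipseQuad a b c` is that of `g` and `t > 0` is small. -/
theorem exists_mem_ellipseLog_supDist_lt {f g : ℝ → ℝ} (hf : Continuous f) (hfp : Periodic f π)
    (hg : g ∈ EllipseLog) {d α β γ : ℝ} (hfg : ∀ x, |f x - g x| ≤ d)
    (hmax : ∀ x, 0 ≤ ellipseQuad α β γ x → f x - g x < d)
    (hmin : ∀ x, ellipseQuad α β γ x ≤ 0 → -d < f x - g x) :
    ∃ g' ∈ EllipseLog, supDist f g' < d := by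
  have hr : Continuous fun x => f x - g x := hf.sub (continuous_of_mem_ellipseLog hg)
  have hrp : Periodic (fun x => f x - g x) π := hfp.sub (periodic_of_mem_ellipseLog hg)
  have hq := ellipseQuad.continuous α β γ
  have hqp := ellipseQuad.periodic α β γ
  obtain ⟨η₁, hη₁, h₁⟩ := hrp.exists_pos_forall_lt_imp_neg pi_ne_zero hr hq hqp hmax
  obtain ⟨η₂, hη₂, h₂⟩ := Periodic.exists_pos_forall_lt_imp_neg (r := fun x => -(f x - g x))
    (q := fun x => -ellipseQuad α β γ x) (d := d) pi_ne_zero hr.neg hq.neg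
    (fun x => congrArg Neg.neg (hrp x)) (fun x => congrArg Neg.neg (hqp x))
    fun x hx => by linarith [hmin x (by linarith)]
  obtain ⟨a, b, c, hQ, rfl⟩ := mem_ellipseLog_iff.1 hg
  set η := min (min η₁ η₂) (1 / 2)
  have hm : 0 < a - √(b ^ 2 + c ^ 2) := by
    obtain ⟨φ, hφ⟩ := ellipseQuad.exists_eq_sub_sqrt a b c
    exact hφ ▸ hQ φ
  obtain ⟨t, ht, hs⟩ := exists_pos_forall_abs_mul_div_lt hm (ellipseQuad.sub_sqrt_le a b c)
    (ellipseQuad.abs_le α β γ) (by positivity : 0 < η)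
  have hQ' : ∀ x, ellipseQuad (a + t * α) (b + t * β) (c + t * γ) x
      = ellipseQuad a b c x * (1 + t * ellipseQuad α β γ x / ellipseQuad a b c x) := fun x => by
    rw [← ellipseQuad.add_const_mul]; field_simp [(hQ x).ne']
  have hpos : ∀ x, 0 < 1 + t * ellipseQuad α β γ x / ellipseQuad a b c x := fun x => by
    linarith [neg_abs_le (t * ellipseQuad α β γ x / ellipseQuad a b c x), hs x,
      min_le_right (min η₁ η₂) (1 / 2)]
  have hg' : (fun x => -(1 / 2) * log (ellipseQuad (a + t * α) (b + t * β) (c + t * γ) x))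
      ∈ EllipseLog :=
    mem_ellipseLog_iff.2 ⟨_, _, _, fun x => hQ' x ▸ mul_pos (hQ x) (hpos x), rfl⟩
  refine ⟨_, hg', supDist_lt pi_ne_zero hf (continuous_of_mem_ellipseLog hg') hfp
    (periodic_of_mem_ellipseLog hg') fun x => ?_⟩
  have hη₁' : η ≤ η₁ := (min_le_left _ _).trans (min_le_left _ _)
  have hη₂' : η ≤ η₂ := (min_le_left _ _).trans (min_le_right _ _)
  rw [hQ', log_mul (hQ x).ne' (hpos x).ne']
  convert abs_add_half_log_one_add_lt (hfg x) (hs x) (min_le_right _ _) (fun h => ?_) (fun h => ?_)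
    using 2
  · ring
  · exact div_neg_of_neg_of_pos (mul_neg_of_pos_of_neg ht (h₁ x (by linarith))) (hQ x)
  · exact div_pos (mul_pos ht (neg_neg_iff_pos.1 (h₂ x (by linarith)))) (hQ x)

/-- Otherwise shifting `g` by the midrange of `f - g` would be strictly better. -/
theorem exists_sub_eq_supDist_of_isMin {f g : ℝ → ℝ} (hf : Continuous f) (hfp : Periodic f π)
    (hg : g ∈ EllipseLog) (hmin : ∀ g' ∈ EllipseLog, supDist f g ≤ supDist f g') :
    (∃ p, f p - g p = supDist f g) ∧ ∃ q, f q - g q = -supDist f g := by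
  have hgc := continuous_of_mem_ellipseLog hg
  have hgp := periodic_of_mem_ellipseLog hg
  have hrp : Periodic (fun x => f x - g x) π := hfp.sub hgp
  obtain ⟨p, hp⟩ := hrp.exists_forall_ge_of_continuous pi_ne_zero (hf.sub hgc)
  obtain ⟨q, hq⟩ := hrp.exists_forall_le_of_continuous pi_ne_zero (hf.sub hgc)
  obtain ⟨-, -, hd⟩ := exists_abs_sub_eq_supDist pi_ne_zero hf hgc hfp hgp
  have hshift : supDist f (fun x => g x + (f p - g p + (f q - g q)) / 2)
      ≤ (f p - g p - (f q - g q)) / 2 :=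
    supDist_le fun x => abs_le.2 ⟨by linarith [hq x], by linarith [hp x]⟩
  have hbest := hmin _ (add_const_mem_ellipseLog hg ((f p - g p + (f q - g q)) / 2))
  have hp_le := abs_le.1 (hd p)
  have hq_le := abs_le.1 (hd q)
  exact ⟨⟨p, by linarith⟩, ⟨q, by linarith⟩⟩

/-- Any best uniform approximation from `𝒞` to a continuous π-periodic `f` admits a
second-order alternance. -/
theorem min_implies_alternance (f : ℝ → ℝ) (hf : Continuous f)
    (hper : Function.Periodic f π)
    (gbar : ℝ → ℝ) (hgbar : gbar ∈ EllipseLog)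
    (hmin : ∀ g ∈ EllipseLog, supDist f gbar ≤ supDist f g) :
    ∃ φ₁ ψ₁ φ₂ ψ₂ : ℝ, φ₁ < ψ₁ ∧ ψ₁ < φ₂ ∧ φ₂ < ψ₂ ∧ ψ₂ < φ₁ + π ∧
      f φ₁ - gbar φ₁ = supDist f gbar ∧ f φ₂ - gbar φ₂ = supDist f gbar ∧
      gbar ψ₁ - f ψ₁ = supDist f gbar ∧ gbar ψ₂ - f ψ₂ = supDist f gbar := by
  have hr : Continuous fun x => f x - gbar x := hf.sub (continuous_of_mem_ellipseLog hgbar)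
  have hrp : Periodic (fun x => f x - gbar x) π := hper.sub (periodic_of_mem_ellipseLog hgbar)
  obtain ⟨x₀, hx₀, hle⟩ := exists_abs_sub_eq_supDist pi_ne_zero hf
    (continuous_of_mem_ellipseLog hgbar) hper (periodic_of_mem_ellipseLog hgbar)
  set d := supDist f gbar
  rcases (hx₀ ▸ abs_nonneg _ : 0 ≤ d).eq_or_lt with hd | hd
  · have h0 : ∀ x, f x - gbar x = 0 := fun x =>
      abs_eq_zero.1 (le_antisymm (hd ▸ hle x) (abs_nonneg _))
    exact ⟨0, π / 4, π / 2, 3 * π / 4, by linarith [pi_pos], by linarith [pi_pos],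
      by linarith [pi_pos], by linarith [pi_pos], by linarith [h0 0], by linarith [h0 (π / 2)],
      by linarith [h0 (π / 4)], by linarith [h0 (3 * π / 4)]⟩
  by_contra hno
  obtain ⟨⟨p, hp⟩, q, hq⟩ := exists_sub_eq_supDist_of_isMin hf hper hgbar hmin
  have hsep : ¬ HasAlternance {x | f x - gbar x = d} {x | f x - gbar x = -d} :=
    fun ⟨φ₁, ψ₁, φ₂, ψ₂, h₁, h₂, h₃, h₄, e₁, (e₂ : _ = -d), e₃, (e₄ : _ = -d)⟩ =>
      hno ⟨φ₁, ψ₁, φ₂, ψ₂, h₁, h₂, h₃, h₄, e₁, e₃, by linarith, by linarith⟩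
  obtain ⟨α, β, γ, hA, hB⟩ := exists_ellipseQuad_separating (isClosed_eq hr continuous_const)
    (isClosed_eq hr continuous_const) (hrp.comp (· = d)) (hrp.comp (· = -d))
    (disjoint_left.2 fun x (hx : _ = d) (hx' : _ = -d) => by linarith) hp hq hsep
  obtain ⟨g', hg', hlt⟩ := exists_mem_ellipseLog_supDist_lt hf hper hgbar hle
    (fun x hx => lt_of_le_of_ne ((le_abs_self _).trans (hle x)) (hA x hx))
    (fun x hx => lt_of_le_of_ne (neg_le_of_abs_le (hle x)) (Ne.symm (hB x hx)))
  exact (hmin g' hg').not_gt hlt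
end
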